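/- Let T be a symmetric 4-tensor of dimension d and define λ_maxabs(T) = max_{‖v‖=1} |Σ_{i,j,k,ℓ} T_{ijkℓ} v_i v_j v_k v_ℓ|. Then for all indices s, t ∈ {1,…,d}, λ_maxabs(T) ≥ |T_{sstt}| (in particular, taking t = s, λ_maxabs(T) ≥ |T_{ssss}|). -/

import Mathlib

/-!
Write `q v = ∑_f T f ∏_j v (f j)`, a form homogeneous of degree 4, so `|q v| ≤ λ ‖v‖⁴`.
For `s ≠ t`, in `q (e_s + e_t) + q (e_s - e_t)` the terms with an odd number of `t`s cancel, and
symmetry collects the six arrangements of `s, s, t, t`: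
`q (e_s + e_t) + q (e_s - e_t) = 2 (T_ssss + 6 T_sstt + T_tttt)`.
As `T_ssss = q e_s`, this gives `12 |T_sstt| ≤ 4λ + 4λ + 2λ + 2λ`.
-/

open Finset

variable {ι R : Type*} {n : ℕ}

def IsSymmetricTensor {α : Type*} (T : (Fin n → ι) → α) : Prop :=
  ∀ (σ : Equiv.Perm (Fin n)) (f : Fin n → ι), T (f ∘ σ) = T f

theorem IsSymmetricTensor.apply_eq_of_comp_eq {α : Type*} {T : (Fin n → ι) → α}
    (hT : IsSymmetricTensor T) (σ : Equiv.Perm (Fin n)) {f g : Fin n → ι} (h : g ∘ σ = f) :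
    T f = T g := by
  rw [← h, hT]

variable [Fintype ι]

theorem Fintype.sum_pi_fin_succ {M : Type*} [AddCommMonoid M] (G : (Fin (n + 1) → ι) → M) :
    ∑ f, G f = ∑ i, ∑ g, G (Fin.cons i g) := by
  rw [← (Fin.consEquiv fun _ => ι).sum_comp, Fintype.sum_prod_type]
  rfl

section CommRing

variable [CommRing R]

def tensorForm (T : (Fin n → ι) → R) (v : ι → R) : R :=
  ∑ f : Fin n → ι, T f * ∏ j, v (f j)

theorem tensorForm_smul (T : (Fin n → ι) → R) (c : R) (v : ι → R) :
    tensorForm T (c • v) = c ^ n * tensorForm T v := by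
  simp only [tensorForm, Pi.smul_apply, smul_eq_mul, prod_mul_distrib, prod_const, card_univ,
    Fintype.card_fin, mul_sum]
  exact sum_congr rfl fun f _ => by ring

theorem tensorForm_single [DecidableEq ι] (T : (Fin n → ι) → R) (s : ι) :
    tensorForm T (Pi.single s 1) = T fun _ => s := by
  have hprod (f : Fin n → ι) :
      ∏ j, (Pi.single s 1 : ι → R) (f j) = if f = fun _ => s then 1 else 0 := by
    simp only [Pi.single_apply, Fintype.prod_boole, funext_iff]
    congr
  simp [tensorForm, hprod]

theorem tensorForm_four (T : (Fin 4 → ι) → R) (v : ι → R) :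
    tensorForm T v = ∑ i, v i * ∑ j, v j * ∑ k, v k * ∑ l, v l * T ![i, j, k, l] := by
  simp only [tensorForm, Fintype.sum_pi_fin_succ, Fintype.sum_unique, mul_sum, Fin.prod_univ_four]
  refine sum_congr rfl fun i _ => sum_congr rfl fun j _ => sum_congr rfl fun k _ =>
    sum_congr rfl fun l _ => ?_
  rw [Subsingleton.elim default ![]]
  show T ![i, j, k, l] * (v i * v j * v k * v l) = _
  ring

theorem sum_single_add_single_mul [DecidableEq ι] (s t : ι) (a b : R) (h : ι → R) :
    ∑ i, (Pi.single s a + Pi.single t b : ι → R) i * h i = a * h s + b * h t := by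
  change (Pi.single s a + Pi.single t b) ⬝ᵥ h = _
  rw [add_dotProduct, single_dotProduct, single_dotProduct]

theorem tensorForm_single_add_single_one_add_neg_one [DecidableEq ι] {T : (Fin 4 → ι) → R}
    (hT : IsSymmetricTensor T) (s t : ι) :
    tensorForm T (Pi.single s 1 + Pi.single t 1) + tensorForm T (Pi.single s 1 + Pi.single t (-1))
      = 2 * (T ![s, s, s, s] + 6 * T ![s, s, t, t] + T ![t, t, t, t]) := by
  have h1 : T ![s, t, s, t] = T ![s, s, t, t] :=
    hT.apply_eq_of_comp_eq (Equiv.swap 1 2) (by ext i; fin_cases i <;> rfl)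
  have h2 : T ![s, t, t, s] = T ![s, s, t, t] :=
    hT.apply_eq_of_comp_eq (Equiv.swap 1 3) (by ext i; fin_cases i <;> rfl)
  have h3 : T ![t, s, s, t] = T ![s, s, t, t] :=
    hT.apply_eq_of_comp_eq (Equiv.swap 0 2) (by ext i; fin_cases i <;> rfl)
  have h4 : T ![t, s, t, s] = T ![s, s, t, t] :=
    hT.apply_eq_of_comp_eq (Equiv.swap 0 3) (by ext i; fin_cases i <;> rfl)
  have h5 : T ![t, t, s, s] = T ![s, s, t, t] :=
    hT.apply_eq_of_comp_eq (Equiv.swap 0 2 * Equiv.swap 1 3) (by ext i; fin_cases i <;> rfl)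
  simp only [tensorForm_four, sum_single_add_single_mul, h1, h2, h3, h4, h5]
  ring

end CommRing

theorem abs_tensorForm_le {T : (Fin n → ι) → ℝ} {c : ℝ} (hn : n ≠ 0)
    (hc : ∀ v : ι → ℝ, ∑ i, v i ^ 2 = 1 → |tensorForm T v| ≤ c) (v : ι → ℝ) :
    |tensorForm T v| ≤ c * √(∑ i, v i ^ 2) ^ n := by
  have hS : 0 ≤ ∑ i, v i ^ 2 := sum_nonneg fun i _ => sq_nonneg (v i)
  rcases hS.eq_or_lt with hS | hS
  · have hv : v = 0 := by
      ext i
      exact pow_eq_zero_iff two_ne_zero |>.mp <|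
        (sum_eq_zero_iff_of_nonneg fun i _ => sq_nonneg (v i)).mp hS.symm i (mem_univ i)
    have hzero : tensorForm T (0 : ι → ℝ) = 0 := by
      simpa [hn] using tensorForm_smul T 0 (0 : ι → ℝ)
    simp [hv, hzero, hn]
  obtain ⟨r, hr_def⟩ : ∃ r, r = √(∑ i, v i ^ 2) := ⟨_, rfl⟩
  have hr : 0 < r := hr_def ▸ Real.sqrt_pos.mpr hS
  have hu : ∑ i, (r⁻¹ • v) i ^ 2 = 1 := by
    simp only [Pi.smul_apply, smul_eq_mul, mul_pow, ← mul_sum, inv_pow, hr_def,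
      Real.sq_sqrt hS.le]
    exact inv_mul_cancel₀ hS.ne'
  have hv : v = r • r⁻¹ • v := by rw [smul_smul, mul_inv_cancel₀ hr.ne', one_smul]
  rw [← hr_def, hv, tensorForm_smul, abs_mul, abs_pow, abs_of_pos hr, mul_comm c]
  exact mul_le_mul_of_nonneg_left (hc _ hu) (by positivity)

theorem abs_apply_const_le [DecidableEq ι] {T : (Fin n → ι) → ℝ} {c : ℝ}
    (hc : ∀ v : ι → ℝ, ∑ i, v i ^ 2 = 1 → |tensorForm T v| ≤ c) (s : ι) :
    |T fun _ => s| ≤ c := by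
  rw [← tensorForm_single T s]
  exact hc _ (by simp [Pi.single_apply])

theorem abs_apply_sstt_le [DecidableEq ι] {T : (Fin 4 → ι) → ℝ} (hT : IsSymmetricTensor T)
    {c : ℝ} (hc : ∀ v : ι → ℝ, ∑ i, v i ^ 2 = 1 → |tensorForm T v| ≤ c) (s t : ι) :
    |T ![s, s, t, t]| ≤ c := by
  have hdiag (s : ι) : |T ![s, s, s, s]| ≤ c := by
    have hconst : ![s, s, s, s] = fun _ => s := by ext i; fin_cases i <;> rfl
    exact hconst ▸ abs_apply_const_le hc s
  rcases eq_or_ne s t with rfl | hst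
  · exact hdiag s
  have hpair (σ : ℝ) (hσ : σ ^ 2 = 1) :
      |tensorForm T (Pi.single s 1 + Pi.single t σ)| ≤ 4 * c := by
    have hnorm : ∑ i, (Pi.single s 1 + Pi.single t σ : ι → ℝ) i ^ 2 = 2 := by
      simp only [sq]
      rw [sum_single_add_single_mul]
      simp only [Pi.add_apply, Pi.single_eq_same, Pi.single_eq_of_ne hst,
        Pi.single_eq_of_ne hst.symm]
      linear_combination hσ
    have h4 : √(2 : ℝ) ^ 4 = 4 := by
      rw [show 4 = 2 * 2 by rfl, pow_mul, Real.sq_sqrt zero_le_two]; norm_num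
    have h := abs_tensorForm_le four_ne_zero hc (Pi.single s 1 + Pi.single t σ)
    rwa [hnorm, h4, mul_comm] at h
  have hsum := tensorForm_single_add_single_one_add_neg_one hT s t
  have hp := abs_le.mp (hpair 1 (one_pow 2))
  have hm := abs_le.mp (hpair (-1) (by norm_num))
  have hs := abs_le.mp (hdiag s)
  have ht := abs_le.mp (hdiag t)
  rw [abs_le]
  constructor <;> linarith

/-- For a symmetric 4-tensor T with λ_maxabs(T) = max_{‖v‖=1} |Σ T_{ijkℓ} v_i v_j v_k v_ℓ|,
for all indices s, t one has λ_maxabs(T) ≥ |T_{sstt}|; in particular (t = s)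
λ_maxabs(T) ≥ |T_{ssss}|. -/
theorem symm4_lambda_maxabs_ge_sstt_entry
    (d : ℕ) (T : (Fin 4 → Fin d) → ℝ)
    (hsym : ∀ (p : Equiv.Perm (Fin 4)) (f : Fin 4 → Fin d), T (f ∘ p) = T f)
    (lamMaxAbs : ℝ)
    (hmax : IsGreatest {x : ℝ | ∃ v : Fin d → ℝ, (∑ i, v i ^ 2 = 1)
        ∧ x = |∑ f : Fin 4 → Fin d, T f * ∏ j, v (f j)|} lamMaxAbs) :
    (∀ s t : Fin d, |T ![s, s, t, t]| ≤ lamMaxAbs)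
    ∧ (∀ s : Fin d, |T ![s, s, s, s]| ≤ lamMaxAbs) := by
  have hbound (v : Fin d → ℝ) (hv : ∑ i, v i ^ 2 = 1) : |tensorForm T v| ≤ lamMaxAbs :=
    hmax.2 ⟨v, hv, rfl⟩
  exact ⟨abs_apply_sstt_le hsym hbound, fun s => abs_apply_sstt_le hsym hbound s s⟩
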